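/- arXiv:2004.06757 — 7 statements merged into one kernel-verified Lean document; each statement's English description precedes it below -/
import Mathlib

section
/- Let X be a random vector in ℝⁿ, m ≥ 1 an integer, and x a point of the m-dimensional mould C_m(X). Then E[1/‖X−x‖^m] = +∞. -/
/-!
Membership in the mould gives `c > 0` with `P(‖X - x‖ < ε) ≥ c εᵐ` for small `ε > 0`.
If `E[‖X - x‖⁻ᵐ]` were finite, Markov's inequality would give
`P(‖X - x‖ < ε) ≤ εᵐ E[‖X - x‖⁻ᵐ] → 0`, so by absolute continuity of the integral the
contribution `E[‖X - x‖⁻ᵐ; ‖X - x‖ < ε]` of the small balls would tend to `0`. But on the ball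
the integrand is at least `ε⁻ᵐ`, so this contribution is at least `ε⁻ᵐ P(‖X - x‖ < ε) ≥ c`.
-/

open MeasureTheory Filter Topology
open scoped ENNReal

section SublevelSets

variable {Ω : Type*} [MeasurableSpace Ω] {μ : Measure Ω} {d : Ω → ℝ}

theorem measure_lt_le_mul_setLIntegral_inv_pow (hd : Measurable d) (hd0 : ∀ ω, 0 ≤ d ω)
    (m : ℕ) {ε : ℝ} (hε : 0 < ε) :
    μ {ω | d ω < ε} ≤
      ENNReal.ofReal (ε ^ m) * ∫⁻ ω in {ω | d ω < ε}, (ENNReal.ofReal (d ω ^ m))⁻¹ ∂μ := by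
  have hε0 : ENNReal.ofReal (ε ^ m) ≠ 0 := by simp [pow_pos hε]
  calc μ {ω | d ω < ε}
      = ENNReal.ofReal (ε ^ m) * ((ENNReal.ofReal (ε ^ m))⁻¹ * μ {ω | d ω < ε}) :=
        (ENNReal.mul_inv_cancel_left hε0 ENNReal.ofReal_ne_top).symm
    _ = ENNReal.ofReal (ε ^ m) * ∫⁻ _ in {ω | d ω < ε}, (ENNReal.ofReal (ε ^ m))⁻¹ ∂μ := by
        rw [setLIntegral_const]
    _ ≤ _ := by
        gcongr ENNReal.ofReal (ε ^ m) * ?_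
        refine setLIntegral_mono' (measurableSet_lt hd measurable_const) fun ω hω => ?_
        gcongr
        · exact hd0 ω
        · exact le_of_lt hω

theorem tendsto_measure_lt_nhdsGT_zero (hd : Measurable d) (hd0 : ∀ ω, 0 ≤ d ω)
    {m : ℕ} (hm : m ≠ 0) (hI : ∫⁻ ω, (ENNReal.ofReal (d ω ^ m))⁻¹ ∂μ ≠ ⊤) :
    Tendsto (fun ε => μ {ω | d ω < ε}) (𝓝[>] 0) (𝓝 0) := by
  have hpow : Tendsto (fun ε : ℝ => ENNReal.ofReal (ε ^ m)) (𝓝[>] 0) (𝓝 0) := by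
    simpa [zero_pow hm] using
      (ENNReal.tendsto_ofReal ((continuous_pow m).tendsto 0)).mono_left nhdsWithin_le_nhds
  have hbound : Tendsto
      (fun ε : ℝ => ENNReal.ofReal (ε ^ m) * ∫⁻ ω, (ENNReal.ofReal (d ω ^ m))⁻¹ ∂μ)
      (𝓝[>] 0) (𝓝 0) := by
    simpa using ENNReal.Tendsto.mul_const hpow (Or.inr hI)
  refine tendsto_of_tendsto_of_tendsto_of_le_of_le' tendsto_const_nhds hbound
    (Eventually.of_forall fun _ => zero_le) ?_
  filter_upwards [self_mem_nhdsWithin] with ε (hε : 0 < ε)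
  exact (measure_lt_le_mul_setLIntegral_inv_pow hd hd0 m hε).trans
    (by gcongr; exact Measure.restrict_le_self)

theorem lintegral_inv_pow_eq_top_of_eventually_mul_pow_le_measure_lt (hd : Measurable d)
    (hd0 : ∀ ω, 0 ≤ d ω) {m : ℕ} (hm : m ≠ 0) {c : ℝ≥0∞} (hc : c ≠ 0)
    (hsmall : ∀ᶠ ε in 𝓝[>] 0, c * ENNReal.ofReal (ε ^ m) ≤ μ {ω | d ω < ε}) :
    ∫⁻ ω, (ENNReal.ofReal (d ω ^ m))⁻¹ ∂μ = ⊤ := by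
  by_contra hI
  have hvanish := tendsto_setLIntegral_zero hI (tendsto_measure_lt_nhdsGT_zero hd hd0 hm hI)
  have hbelow : ∀ᶠ ε in 𝓝[>] 0,
      c ≤ ∫⁻ ω in {ω | d ω < ε}, (ENNReal.ofReal (d ω ^ m))⁻¹ ∂μ := by
    filter_upwards [hsmall, self_mem_nhdsWithin] with ε hcε (hε : 0 < ε)
    have hpos : ENNReal.ofReal (ε ^ m) ≠ 0 := by simp [pow_pos hε]
    rw [← ENNReal.mul_le_mul_iff_left hpos ENNReal.ofReal_ne_top]
    exact hcε.trans
      ((measure_lt_le_mul_setLIntegral_inv_pow hd hd0 m hε).trans_eq (mul_comm _ _))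
  exact hc (nonpos_iff_eq_zero.mp (ge_of_tendsto hvanish hbelow))

end SublevelSets

theorem expectation_inv_pow_infinite_of_mem_mould_general {Ω : Type*} [MeasurableSpace Ω]
    (μ : Measure Ω) {n : ℕ}
    (X : Ω → EuclideanSpace ℝ (Fin n)) (hX : Measurable X)
    (m : ℕ) (hm : 1 ≤ m) (x : EuclideanSpace ℝ (Fin n))
    (hx : 0 < Filter.liminf
        (fun ε : ℝ => μ {ω | ‖X ω - x‖ < ε} / ENNReal.ofReal (ε ^ m))
        (nhdsWithin 0 (Set.Ioi 0))) :
    ∫⁻ ω, (ENNReal.ofReal (‖X ω - x‖ ^ m))⁻¹ ∂μ = ⊤ := by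
  obtain ⟨c, hc0, hc⟩ := exists_between hx
  refine lintegral_inv_pow_eq_top_of_eventually_mul_pow_le_measure_lt (hX.sub_const x).norm
    (fun ω => norm_nonneg _) (by omega) hc0.ne' ?_
  filter_upwards [eventually_lt_of_lt_liminf hc] with ε hε
  exact ENNReal.mul_le_of_le_div hε.le

/-- If `x` belongs to the `m`-dimensional mould of `X` (with `m ≥ 1`),
i.e. `liminf_{ε→0⁺} P(‖X - x‖ < ε)/ε^m > 0`, then `E[1/‖X - x‖^m] = +∞`. -/
theorem expectation_inv_pow_infinite_of_mem_mould {Ω : Type*} [MeasurableSpace Ω]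
    (μ : Measure Ω) [IsProbabilityMeasure μ] {n : ℕ}
    (X : Ω → EuclideanSpace ℝ (Fin n)) (hX : Measurable X)
    (m : ℕ) (hm : 1 ≤ m) (x : EuclideanSpace ℝ (Fin n))
    (hx : 0 < Filter.liminf
        (fun ε : ℝ => μ {ω | ‖X ω - x‖ < ε} / ENNReal.ofReal (ε ^ m))
        (nhdsWithin 0 (Set.Ioi 0))) :
    ∫⁻ ω, (ENNReal.ofReal (‖X ω - x‖ ^ m))⁻¹ ∂μ = ⊤ :=
  expectation_inv_pow_infinite_of_mem_mould_general μ X hX m hm x hx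
end

section
/- Let X be a random vector in ℝⁿ and let K ⊆ ℝⁿ be a compact set with P(X ∈ K) > 0. Then K contains at least one point of the n-dimensional mould C_n(X); more precisely there exist a ∈ K, c > 0 and ε₀ > 0 such that P(‖X−a‖_∞ < ε) ≥ c·εⁿ for all 0 < ε < ε₀. -/
open MeasureTheory Filter

/-- If `K ⊆ ℝⁿ` is compact with `P(X ∈ K) > 0`, then `K` contains a
point `a` of the `n`-dimensional mould of `X`; more precisely there are `a ∈ K`,
`c > 0` and `ε₀ > 0` with `P(‖X - a‖_∞ < ε) ≥ c εⁿ` for all `0 < ε < ε₀`.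
(Here `ℝⁿ` carries the sup norm, which is the norm of the pi type `Fin n → ℝ`;
the mould is independent of the choice of norm.) -/
theorem compact_pos_meas_contains_mould_point {Ω : Type*} [MeasurableSpace Ω]
    (μ : Measure Ω) [IsProbabilityMeasure μ] {n : ℕ}
    (X : Ω → (Fin n → ℝ)) (hX : Measurable X)
    (K : Set (Fin n → ℝ)) (hK : IsCompact K) (hpos : 0 < μ (X ⁻¹' K)) :
    ∃ a ∈ K,
      (0 < Filter.liminf
          (fun ε : ℝ => μ {ω | ‖X ω - a‖ < ε} / ENNReal.ofReal (ε ^ n))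
          (nhdsWithin 0 (Set.Ioi 0))) ∧
      ∃ c > (0 : ℝ), ∃ ε₀ > (0 : ℝ), ∀ ε : ℝ, 0 < ε → ε < ε₀ →
        ENNReal.ofReal (c * ε ^ n) ≤ μ {ω | ‖X ω - a‖ < ε} := by
  classical
  obtain ⟨R₀, hR₀⟩ := (Metric.isBounded_iff_subset_closedBall 0).1 hK.isBounded
  set R : ℝ := max R₀ 1 with hRdef
  have hR1 : (1:ℝ) ≤ R := le_max_right _ _
  have hR : 0 < R := lt_of_lt_of_le one_pos hR1
  have hKR : K ⊆ Metric.closedBall 0 R :=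
    hR₀.trans (Metric.closedBall_subset_closedBall (le_max_left _ _))
  set P := μ (X ⁻¹' K) with hPdef
  -- dyadic subdivision step
  have step : ∀ (b : Fin n → ℝ) (r : ℝ), ∃ b' : Fin n → ℝ,
      0 ≤ r → dist b' b ≤ r/2 ∧
        μ (X ⁻¹' (Metric.closedBall b r ∩ K)) / 2^n
          ≤ μ (X ⁻¹' (Metric.closedBall b' (r/2) ∩ K)) := by
    intro b r
    by_cases hr : 0 ≤ r
    · set f : (Fin n → Bool) → (Fin n → ℝ) :=
        fun s i => b i + (if s i then r/2 else -(r/2)) with hf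
      have cover : Metric.closedBall b r ⊆
          ⋃ s : Fin n → Bool, Metric.closedBall (f s) (r/2) := by
        intro x hx
        rw [Metric.mem_closedBall] at hx
        refine Set.mem_iUnion.2 ⟨fun i => decide (0 ≤ x i - b i), ?_⟩
        rw [Metric.mem_closedBall, dist_pi_le_iff (by linarith)]
        intro i
        have hxi : |x i - b i| ≤ r := by
          have := (dist_pi_le_iff hr).1 hx i
          rwa [Real.dist_eq] at this
        rw [abs_le] at hxi
        simp only [Real.dist_eq, hf, decide_eq_true_eq]
        by_cases hs : 0 ≤ x i - b i
        · rw [if_pos hs, abs_le]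
          constructor <;> linarith
        · rw [if_neg hs, abs_le]
          constructor <;> linarith
      have hsub : μ (X ⁻¹' (Metric.closedBall b r ∩ K)) ≤
          ∑ s : Fin n → Bool, μ (X ⁻¹' (Metric.closedBall (f s) (r/2) ∩ K)) := by
        have h1 : X ⁻¹' (Metric.closedBall b r ∩ K) ⊆
            ⋃ s : Fin n → Bool, X ⁻¹' (Metric.closedBall (f s) (r/2) ∩ K) := by
          intro ω hω
          obtain ⟨s, hs⟩ := Set.mem_iUnion.1 (cover hω.1)
          exact Set.mem_iUnion.2 ⟨s, ⟨hs, hω.2⟩⟩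
        exact (measure_mono h1).trans (measure_iUnion_fintype_le _ _)
      obtain ⟨s₀, -, hs₀⟩ := Finset.exists_mem_eq_sup (Finset.univ : Finset (Fin n → Bool))
        ⟨default, Finset.mem_univ _⟩
        (fun s => μ (X ⁻¹' (Metric.closedBall (f s) (r/2) ∩ K)))
      refine ⟨f s₀, fun _ => ⟨?_, ?_⟩⟩
      · rw [dist_pi_le_iff (by linarith)]
        intro i
        simp only [Real.dist_eq, hf]
        by_cases hs : s₀ i = true
        · rw [if_pos hs, show b i + r/2 - b i = r/2 by ring, abs_of_nonneg (by linarith)]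
        · rw [if_neg hs, show b i + -(r/2) - b i = -(r/2) by ring, abs_neg,
            abs_of_nonneg (by linarith)]
      · rw [ENNReal.div_le_iff_le_mul (Or.inl (pow_ne_zero n two_ne_zero)) (Or.inl (ENNReal.pow_ne_top ENNReal.ofNat_ne_top))]
        calc μ (X ⁻¹' (Metric.closedBall b r ∩ K))
            ≤ ∑ s : Fin n → Bool, μ (X ⁻¹' (Metric.closedBall (f s) (r/2) ∩ K)) := hsub
          _ ≤ (Finset.univ : Finset (Fin n → Bool)).card •
                μ (X ⁻¹' (Metric.closedBall (f s₀) (r/2) ∩ K)) :=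
              Finset.sum_le_card_nsmul _ _ _
                (fun s _ => hs₀ ▸ Finset.le_sup
                  (f := fun s => μ (X ⁻¹' (Metric.closedBall (f s) (r/2) ∩ K)))
                  (Finset.mem_univ s))
          _ = μ (X ⁻¹' (Metric.closedBall (f s₀) (r/2) ∩ K)) * 2^n := by
              rw [Finset.card_univ, nsmul_eq_mul]
              simp [Fintype.card_fun, mul_comm]
    · exact ⟨b, fun h => absurd h hr⟩
  choose F hF using step
  set seq : ℕ → Fin n → ℝ :=
    fun k => Nat.rec (0 : Fin n → ℝ) (fun k a => F a (R / 2 ^ k)) k with hseq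
  have hseqS : ∀ k, seq (k+1) = F (seq k) (R / 2^k) := fun k => rfl
  have hrpos : ∀ k : ℕ, (0:ℝ) ≤ R / 2^k := fun k => by positivity
  have hhalf : ∀ k : ℕ, R / 2^k / 2 = R / 2^(k+1) := fun k => by ring
  have hdist : ∀ k, dist (seq (k+1)) (seq k) ≤ R/2^(k+1) := by
    intro k
    have := (hF (seq k) (R/2^k) (hrpos k)).1
    rw [hseqS, ← hhalf]
    exact this
  have hmeas : ∀ k, P / (2^n)^k ≤
      μ (X ⁻¹' (Metric.closedBall (seq k) (R/2^k) ∩ K)) := by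
    intro k
    induction k with
    | zero =>
      have heq : Metric.closedBall (seq 0) (R/2^0) ∩ K = K := by
        rw [Set.inter_eq_right]
        intro x hx
        have h0 : seq 0 = (0 : Fin n → ℝ) := rfl
        rw [h0]
        simpa using hKR hx
      rw [heq]
      simp [hPdef]
    | succ k ih =>
      have h2 := (hF (seq k) (R/2^k) (hrpos k)).2
      have hstepk : μ (X ⁻¹' (Metric.closedBall (seq k) (R/2^k) ∩ K)) / 2^n ≤
          μ (X ⁻¹' (Metric.closedBall (seq (k+1)) (R/2^(k+1)) ∩ K)) := by
        rw [hseqS, ← hhalf]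
        exact h2
      have hdd : P / (2^n)^(k+1) = P / (2^n)^k / 2^n := by
        rw [div_eq_mul_inv, div_eq_mul_inv, div_eq_mul_inv, pow_succ,
          ENNReal.mul_inv (Or.inl (pow_ne_zero k (pow_ne_zero n two_ne_zero)))
            (Or.inr (pow_ne_zero n two_ne_zero)), mul_assoc]
      rw [hdd]
      exact le_trans (ENNReal.div_le_div_right ih _) hstepk
  have hgeom : ∀ k, dist (seq k) (seq (k+1)) ≤ (R/2) * (1/2)^k := by
    intro k
    rw [dist_comm]
    calc dist (seq (k+1)) (seq k) ≤ R/2^(k+1) := hdist k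
      _ = (R/2) * (1/2)^k := by rw [one_div, inv_pow]; ring
  have hcauchy : CauchySeq seq := cauchySeq_of_le_geometric (1/2) (R/2) (by norm_num) hgeom
  obtain ⟨a, ha⟩ := cauchySeq_tendsto_of_complete hcauchy
  have hlim : ∀ k, dist (seq k) a ≤ R * (1/2)^k := by
    intro k
    calc dist (seq k) a ≤ (R/2) * (1/2)^k / (1 - 1/2) :=
          dist_le_of_le_geometric_of_tendsto (1/2) (R/2) (by norm_num) hgeom ha k
      _ = R * (1/2)^k := by ring
  have hPk : ∀ k, (0:ENNReal) < μ (X ⁻¹' (Metric.closedBall (seq k) (R/2^k) ∩ K)) := by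
    intro k
    refine lt_of_lt_of_le ?_ (hmeas k)
    exact ENNReal.div_pos hpos.ne' (ENNReal.pow_ne_top (ENNReal.pow_ne_top ENNReal.ofNat_ne_top))
  have hptK : ∀ k : ℕ, ∃ x ∈ K, dist a x ≤ 2 * R * (1/2)^k := by
    intro k
    obtain ⟨ω, hω1, hω2⟩ := nonempty_of_measure_ne_zero (hPk k).ne'
    refine ⟨X ω, hω2, ?_⟩
    have h1 : dist (X ω) (seq k) ≤ R/2^k := hω1
    calc dist a (X ω) ≤ dist a (seq k) + dist (seq k) (X ω) := dist_triangle _ _ _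
      _ ≤ R * (1/2)^k + R/2^k := by
          refine add_le_add ?_ ?_
          · rw [dist_comm]; exact hlim k
          · rw [dist_comm]; exact h1
      _ = 2 * R * (1/2)^k := by rw [one_div, inv_pow]; ring
  have haK : a ∈ K := by
    rw [← hK.isClosed.closure_eq]
    apply Metric.mem_closure_iff.2
    intro δ hδ
    obtain ⟨k, hk⟩ := exists_pow_lt_of_lt_one (show (0:ℝ) < δ/(2*R) by positivity)
      (by norm_num : (1/2:ℝ) < 1)
    obtain ⟨x, hx, hdx⟩ := hptK k
    refine ⟨x, hx, lt_of_le_of_lt hdx ?_⟩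
    rw [lt_div_iff₀ (by positivity)] at hk
    nlinarith
  -- the main quantitative bound
  set c : ℝ := P.toReal / (4*R)^n with hc
  have hc0 : 0 < c := by
    apply div_pos _ (by positivity)
    exact ENNReal.toReal_pos hpos.ne' (measure_ne_top μ _)
  have main : ∀ ε : ℝ, 0 < ε → ε < R →
      ENNReal.ofReal (c * ε^n) ≤ μ {ω | ‖X ω - a‖ < ε} := by
    intro ε hε hεR
    have hq : 0 < ε/(2*R) := by positivity
    have hex : ∃ k : ℕ, (1/2:ℝ)^k < ε/(2*R) :=
      exists_pow_lt_of_lt_one hq (by norm_num)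
    set k := Nat.find hex with hkdef
    have hk : (1/2:ℝ)^k < ε/(2*R) := Nat.find_spec hex
    have hk0 : k ≠ 0 := by
      intro h
      rw [h, pow_zero, lt_div_iff₀ (by positivity)] at hk
      linarith
    have hklow : ε/(4*R) ≤ (1/2:ℝ)^k := by
      have hmin : ¬ (1/2:ℝ)^(k-1) < ε/(2*R) := Nat.find_min hex (Nat.pred_lt hk0)
      push_neg at hmin
      have hkk : (1/2:ℝ)^k = (1/2)^(k-1) * (1/2) := by
        rw [← pow_succ]
        congr 1
        omega
      rw [hkk]
      calc ε/(4*R) = (ε/(2*R)) * (1/2) := by ring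
        _ ≤ (1/2)^(k-1) * (1/2) := by nlinarith
    have hincl : X ⁻¹' (Metric.closedBall (seq k) (R/2^k) ∩ K) ⊆
        {ω | ‖X ω - a‖ < ε} := by
      intro ω hω
      have h1 : dist (X ω) (seq k) ≤ R/2^k := hω.1
      have h2 : dist (seq k) a ≤ R * (1/2)^k := hlim k
      have hd : dist (X ω) a < ε := by
        calc dist (X ω) a ≤ dist (X ω) (seq k) + dist (seq k) a := dist_triangle _ _ _
          _ ≤ R/2^k + R*(1/2)^k := add_le_add h1 h2
          _ = 2*R*(1/2)^k := by rw [one_div, inv_pow]; ring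
          _ < 2*R*(ε/(2*R)) := by nlinarith
          _ = ε := by field_simp
      simpa [Set.mem_setOf_eq, ← dist_eq_norm] using hd
    calc ENNReal.ofReal (c * ε^n)
        = ENNReal.ofReal (P.toReal * (ε/(4*R))^n) := by rw [div_pow, hc]; ring_nf
      _ ≤ ENNReal.ofReal (P.toReal * ((1/2:ℝ)^k)^n) := by
          apply ENNReal.ofReal_le_ofReal
          exact mul_le_mul_of_nonneg_left (pow_le_pow_left₀ (by positivity) hklow n)
            ENNReal.toReal_nonneg
      _ = P * ENNReal.ofReal (((1/2:ℝ)^k)^n) := by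
          rw [ENNReal.ofReal_mul ENNReal.toReal_nonneg,
            ENNReal.ofReal_toReal (measure_ne_top μ _)]
      _ ≤ P / (2^n)^k := by
          have h1 : ((1/2:ℝ)^k)^n = ((2:ℝ)^(n*k))⁻¹ := by
            rw [← pow_mul, one_div, inv_pow, mul_comm]
          rw [h1, ENNReal.ofReal_inv_of_pos (by positivity),
            ENNReal.ofReal_pow (by norm_num), ENNReal.ofReal_ofNat,
            div_eq_mul_inv, ← pow_mul]
      _ ≤ μ (X ⁻¹' (Metric.closedBall (seq k) (R/2^k) ∩ K)) := hmeas k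
      _ ≤ μ {ω | ‖X ω - a‖ < ε} := measure_mono hincl
  refine ⟨a, haK, ?_, c, hc0, R, hR, main⟩
  have hev : ∀ᶠ ε in nhdsWithin (0:ℝ) (Set.Ioi 0),
      ENNReal.ofReal c ≤ μ {ω | ‖X ω - a‖ < ε} / ENNReal.ofReal (ε^n) := by
    filter_upwards [Ioo_mem_nhdsGT_of_mem (Set.mem_Ico.2 ⟨le_refl (0:ℝ), hR⟩)] with ε hε
    obtain ⟨hε0, hεR⟩ := hε
    rw [ENNReal.le_div_iff_mul_le
      (Or.inl (by simp only [ne_eq, ENNReal.ofReal_eq_zero, not_le]; positivity))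
      (Or.inl ENNReal.ofReal_ne_top)]
    calc ENNReal.ofReal c * ENNReal.ofReal (ε^n)
        = ENNReal.ofReal (c * ε^n) := (ENNReal.ofReal_mul hc0.le).symm
      _ ≤ _ := main ε hε0 hεR
  have hlf := Filter.le_liminf_of_le (by isBoundedDefault) hev
  exact lt_of_lt_of_le (ENNReal.ofReal_pos.2 hc0) hlf
end

section
/- Let X be a random vector in ℝⁿ. Then P(X ∈ C_n(X)) = 1, i.e. X takes values almost surely in its n-dimensional mould. -/
open MeasureTheory Filter Metric Topology
open scoped ENNReal NNReal

/-!
By Besicovitch's differentiation theorem, for the law `ν` of `X` the ratio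
`vol (closedBall x r) / ν (closedBall x r)` converges `ν`-a.e. to the Radon–Nikodym derivative of
Lebesgue measure with respect to `ν`, which is finite `ν`-a.e. Hence `ν`-a.e. the mass of small
balls is at least a constant times their volume, i.e. a constant times `rⁿ`, and the liminf of
`ν (ball x ε) / εⁿ` is positive.
-/

section Besicovitch

variable {β : Type*} [MetricSpace β] [SecondCountableTopology β] [HasBesicovitchCovering β]
  [MeasurableSpace β] [BorelSpace β]

theorem ae_eventually_measure_closedBall_le_mul (μ ν : Measure β) [IsLocallyFiniteMeasure μ]
    [IsLocallyFiniteMeasure ν] :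
    ∀ᵐ x ∂ν, ∃ C : ℝ≥0, ∀ᶠ r in 𝓝[>] 0, μ (closedBall x r) ≤ C * ν (closedBall x r) := by
  filter_upwards [Besicovitch.ae_tendsto_rnDeriv μ ν, Measure.rnDeriv_lt_top μ ν]
    with x hlim hfin
  obtain ⟨C, hC, -⟩ := ENNReal.lt_iff_exists_nnreal_btwn.1 hfin
  refine ⟨C, ?_⟩
  filter_upwards [hlim.eventually_lt_const hC] with r hr
  exact (ENNReal.div_le_iff_le_mul (Or.inr ENNReal.coe_ne_top)
    (Or.inr (zero_le.trans_lt hC).ne')).1 hr.le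

end Besicovitch

section FiniteDimensional

variable {E : Type*} [NormedAddCommGroup E] [NormedSpace ℝ E] [FiniteDimensional ℝ E]
  [MeasurableSpace E] [BorelSpace E]

theorem ae_pos_liminf_measure_ball_div_pow (ν : Measure E) [IsLocallyFiniteMeasure ν] :
    ∀ᵐ x ∂ν, 0 < liminf (fun ε : ℝ => ν (ball x ε) / ENNReal.ofReal (ε ^ Module.finrank ℝ E))
      (𝓝[>] 0) := by
  set μ : Measure E := Measure.addHaar
  filter_upwards [ae_eventually_measure_closedBall_le_mul μ ν] with x ⟨C, hC⟩
  set K := μ (closedBall 0 2⁻¹) / C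
  have hK : 0 < K :=
    ENNReal.div_pos_iff.2 ⟨(measure_closedBall_pos μ 0 (by norm_num)).ne', ENNReal.coe_ne_top⟩
  refine hK.trans_le (le_liminf_of_le (by isBoundedDefault) ?_)
  filter_upwards [eventually_nhdsGT_zero_mul_left (by norm_num : (0 : ℝ) < 2⁻¹) hC,
    self_mem_nhdsWithin] with ε hεC (hε : 0 < ε)
  rw [ENNReal.le_div_iff_mul_le (Or.inl (by simp [hε])) (Or.inl ENNReal.ofReal_ne_top)]
  calc K * ENNReal.ofReal (ε ^ Module.finrank ℝ E)
      = μ (closedBall x (2⁻¹ * ε)) / C := by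
        rw [mul_comm 2⁻¹, Measure.addHaar_closedBall_mul μ x hε.le (by norm_num), mul_div_assoc,
          mul_comm]
    _ ≤ ν (closedBall x (2⁻¹ * ε)) := ENNReal.div_le_of_le_mul' hεC
    _ ≤ ν (ball x ε) := measure_mono (closedBall_subset_ball (by linarith))

end FiniteDimensional

/-- Every random vector `X` in `ℝⁿ` takes values almost surely in its
`n`-dimensional mould: `P(X ∈ C_n(X)) = 1`. -/
theorem ae_mem_mould {Ω : Type*} [MeasurableSpace Ω]
    (μ : Measure Ω) [IsProbabilityMeasure μ] {n : ℕ}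
    (X : Ω → EuclideanSpace ℝ (Fin n)) (hX : Measurable X) :
    μ {ω | 0 < Filter.liminf
        (fun ε : ℝ => μ {ω' | ‖X ω' - X ω‖ < ε} / ENNReal.ofReal (ε ^ n))
        (nhdsWithin 0 (Set.Ioi 0))} = 1 := by
  have hball (x : EuclideanSpace ℝ (Fin n)) (ε : ℝ) :
      μ.map X (ball x ε) = μ {ω' | ‖X ω' - x‖ < ε} := by
    rw [Measure.map_apply hX measurableSet_ball]
    simp only [Set.preimage, mem_ball, dist_eq_norm]
  have hdensity := ae_of_ae_map hX.aemeasurable (ae_pos_liminf_measure_ball_div_pow (μ.map X))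
  simp only [hball, finrank_euclideanSpace_fin] at hdensity
  exact (measure_congr (ae_eq_univ.2 hdensity)).trans measure_univ
end

section
/- Let X be a random vector in ℝⁿ such that X ∈ B almost surely, where B is a Borel subset of ℝⁿ. Suppose there exist a measurable function d : B → ℝ^m and a constant c > 0 such that ‖d(x) − d(y)‖ ≥ c‖x − y‖ for all x, y ∈ B. Then P(X ∈ C_m(X)) = 1. -/
/-!
Push the law of `X` forward by (a measurable extension of) `d` to a finite measure `ν` on `ℝ^m`.
Differentiating Lebesgue measure with respect to `ν` along closed balls (Besicovitch), the ratio
`vol(B(y,r)) / ν(B(y,r))` tends to the Radon–Nikodym derivative, which is finite `ν`-a.e.; hence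
`ν(B(y,r)) ≳ r^m` as `r → 0` for `ν`-a.e. `y`. The lower bound on `d` makes the `d`-preimage of
`B(d x, c r)` inside `B` lie in `B(x, r)`, so the law of `X` gives `B(x, r)` mass `≳ (c r)^m`.
-/

open MeasureTheory Filter Metric Module
open scoped ENNReal Topology

theorem zero_lt_liminf_div_pow_iff {g : ℝ → ℝ≥0∞} {k : ℕ} :
    0 < liminf (fun r => g r / ENNReal.ofReal (r ^ k)) (𝓝[>] 0) ↔
      ∃ b > 0, ∀ᶠ r in 𝓝[>] 0, b * ENNReal.ofReal (r ^ k) ≤ g r := by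
  constructor
  · intro h
    obtain ⟨b, hb0, hb⟩ := exists_between h
    refine ⟨b, hb0, ?_⟩
    filter_upwards [eventually_lt_of_lt_liminf hb, self_mem_nhdsWithin] with r hr (hr0 : 0 < r)
    exact ((ENNReal.lt_div_iff_mul_lt (Or.inl (by positivity)) (Or.inl ENNReal.ofReal_ne_top)).1
      hr).le
  · rintro ⟨b, hb0, hb⟩
    refine hb0.trans_le (le_liminf_of_le (by isBoundedDefault) ?_)
    filter_upwards [hb, self_mem_nhdsWithin] with r hr (hr0 : 0 < r)
    exact (ENNReal.le_div_iff_mul_le (Or.inl (by positivity)) (Or.inl ENNReal.ofReal_ne_top)).2 hr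

section FiniteDimensional

variable {E : Type*} [NormedAddCommGroup E] [NormedSpace ℝ E] [FiniteDimensional ℝ E]
  [MeasurableSpace E] [BorelSpace E]

theorem ae_zero_lt_liminf_measure_ball_div_pow (ν : Measure E) [IsLocallyFiniteMeasure ν] :
    ∀ᵐ x ∂ν, 0 < liminf (fun r => ν (ball x r) / ENNReal.ofReal (r ^ finrank ℝ E)) (𝓝[>] 0) := by
  set μ : Measure E := Measure.addHaar
  filter_upwards [Besicovitch.ae_tendsto_rnDeriv μ ν, μ.rnDeriv_lt_top ν] with x hx hfin
  have hlim : Tendsto (fun r => ν (closedBall x r) / μ (closedBall x r)) (𝓝[>] 0)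
      (𝓝 (μ.rnDeriv ν x)⁻¹) := by
    refine hx.inv.congr' ?_
    filter_upwards [self_mem_nhdsWithin] with r (hr : 0 < r)
    rw [ENNReal.inv_div (Or.inr measure_closedBall_lt_top.ne)
      (Or.inr (measure_closedBall_pos μ x hr).ne')]
  obtain ⟨b, hb0, hb⟩ := exists_between (ENNReal.inv_pos.2 hfin.ne)
  have hclosed : ∀ᶠ r in 𝓝[>] 0,
      b * μ (closedBall 0 1) * ENNReal.ofReal (r ^ finrank ℝ E) ≤ ν (closedBall x r) := by
    filter_upwards [hlim.eventually (eventually_gt_nhds hb), self_mem_nhdsWithin]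
      with r hr (hr0 : 0 < r)
    rw [mul_assoc, mul_comm (μ _), ← μ.addHaar_closedBall' x hr0.le]
    exact ((ENNReal.lt_div_iff_mul_lt (Or.inl (measure_closedBall_pos μ x hr0).ne')
      (Or.inl measure_closedBall_lt_top.ne)).1 hr).le
  rw [zero_lt_liminf_div_pow_iff]
  refine ⟨b * μ (closedBall 0 1) * ENNReal.ofReal ((1 / 2) ^ finrank ℝ E),
    by simp [hb0, measure_closedBall_pos μ (0 : E) one_pos], ?_⟩
  filter_upwards [eventually_nhdsGT_zero_mul_left (by norm_num : (0 : ℝ) < 1 / 2) hclosed,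
    self_mem_nhdsWithin] with r hr (hr0 : 0 < r)
  calc _ = b * μ (closedBall 0 1) * ENNReal.ofReal ((1 / 2 * r) ^ finrank ℝ E) := by
        rw [mul_pow, ENNReal.ofReal_mul (by positivity), mul_assoc]
    _ ≤ ν (closedBall x (1 / 2 * r)) := hr
    _ ≤ ν (ball x r) := measure_mono (closedBall_subset_ball (by linarith))

end FiniteDimensional

section Dilation

variable {α : Type*} [PseudoMetricSpace α] [MeasurableSpace α] {P : Measure α} {B : Set α} {c : ℝ}

theorem map_ball_le_of_le_mul_dist {β : Type*} [PseudoMetricSpace β] [MeasurableSpace β]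
    [OpensMeasurableSpace β] {f : α → β} (hf : Measurable f)
    (hPB : ∀ᵐ y ∂P, y ∈ B) (hc : 0 < c)
    (hdil : ∀ x ∈ B, ∀ y ∈ B, c * dist x y ≤ dist (f x) (f y)) {x : α} (hx : x ∈ B) (r : ℝ) :
    P.map f (ball (f x) (c * r)) ≤ P (ball x r) := by
  rw [Measure.map_apply hf measurableSet_ball]
  refine measure_mono_ae ?_
  filter_upwards [hPB] with y hy (hfy : dist (f y) (f x) < c * r)
  exact (mul_lt_mul_iff_right₀ hc).1 ((hdil y hy x hx).trans_lt hfy)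

theorem ae_zero_lt_liminf_measure_ball_div_pow_of_le_mul_dist {F : Type*} [NormedAddCommGroup F]
    [NormedSpace ℝ F] [FiniteDimensional ℝ F] [MeasurableSpace F] [BorelSpace F]
    [IsFiniteMeasure P] {f : α → F} (hf : Measurable f) (hPB : ∀ᵐ y ∂P, y ∈ B) (hc : 0 < c)
    (hdil : ∀ x ∈ B, ∀ y ∈ B, c * dist x y ≤ dist (f x) (f y)) :
    ∀ᵐ x ∂P, 0 < liminf (fun r => P (ball x r) / ENNReal.ofReal (r ^ finrank ℝ F)) (𝓝[>] 0) := by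
  filter_upwards [hPB, ae_of_ae_map hf.aemeasurable
    (ae_zero_lt_liminf_measure_ball_div_pow (P.map f))] with x hx hfx
  rw [zero_lt_liminf_div_pow_iff] at hfx ⊢
  obtain ⟨b, hb0, hb⟩ := hfx
  refine ⟨b * ENNReal.ofReal (c ^ finrank ℝ F), by simp [hb0, hc], ?_⟩
  filter_upwards [eventually_nhdsGT_zero_mul_left hc hb] with r hr
  calc _ = b * ENNReal.ofReal ((c * r) ^ finrank ℝ F) := by
        rw [mul_pow, ENNReal.ofReal_mul (by positivity), mul_assoc]
    _ ≤ P.map f (ball (f x) (c * r)) := hr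
    _ ≤ P (ball x r) := map_ball_le_of_le_mul_dist hf hPB hc hdil hx r

end Dilation

/-- If `X ∈ B` a.s. for a Borel set `B ⊆ ℝⁿ` and there is a measurable
map `d : B → ℝ^m` with `‖d x - d y‖ ≥ c ‖x - y‖` on `B` for some `c > 0`, then
`P(X ∈ C_m(X)) = 1`. -/
theorem ae_mem_mould_of_dilation {Ω : Type*} [MeasurableSpace Ω]
    (μ : Measure Ω) [IsProbabilityMeasure μ] {n m : ℕ}
    (X : Ω → EuclideanSpace ℝ (Fin n)) (hX : Measurable X)
    (B : Set (EuclideanSpace ℝ (Fin n))) (hB : MeasurableSet B)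
    (hXB : ∀ᵐ ω ∂μ, X ω ∈ B)
    (d : EuclideanSpace ℝ (Fin n) → EuclideanSpace ℝ (Fin m))
    (hd : Measurable (B.restrict d))
    (c : ℝ) (hc : 0 < c)
    (hdil : ∀ x ∈ B, ∀ y ∈ B, c * ‖x - y‖ ≤ ‖d x - d y‖) :
    μ {ω | 0 < Filter.liminf
        (fun ε : ℝ => μ {ω' | ‖X ω' - X ω‖ < ε} / ENNReal.ofReal (ε ^ m))
        (nhdsWithin 0 (Set.Ioi 0))} = 1 := by
  classical
  set D := B.piecewise d 0
  have hD : Measurable D := measurable_of_restrict_of_restrict_compl hB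
    (by rwa [Set.domRestrict_piecewise])
    (by rw [Set.domRestrict_piecewise_compl]; exact measurable_const)
  have hDdil : ∀ x ∈ B, ∀ y ∈ B, c * dist x y ≤ dist (D x) (D y) := fun x hx y hy => by
    simpa [D, hx, hy, dist_eq_norm] using hdil x hx y hy
  have hlaw := ae_zero_lt_liminf_measure_ball_div_pow_of_le_mul_dist hD
    ((ae_map_iff hX.aemeasurable hB).2 hXB) hc hDdil
  simp_rw [finrank_euclideanSpace_fin, Measure.map_apply hX measurableSet_ball] at hlaw
  have hae := ae_of_ae_map hX.aemeasurable hlaw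
  simp only [Set.preimage, mem_ball, dist_eq_norm] at hae
  exact (measure_congr (ae_eq_univ.2 (ae_iff.1 hae))).trans measure_univ
end

section
/- Let X be a random vector in ℝⁿ taking values almost surely in an m-dimensional linear subspace V of ℝⁿ. Then P(X ∈ C_m(X)) = 1. -/
/-!
Transport the law of `X` to `V` through the orthogonal projection, which is an isometry on `V`,
so that the small-ball probabilities are unchanged. In the `m`-dimensional space `V`, at every
point `z` where `ρ (ball z ε) / ε ^ m` has lower limit `0`, the law `ρ` is dominated by `c • λ`
(`λ` a Haar measure) on arbitrarily small closed balls, for every `c > 0`. The Besicovitch covering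
theorem turns this into `ρ (S ∩ B) ≤ c * λ B` for the set `S` of such points and any ball `B`;
letting `c → 0` shows that `S` is `ρ`-null.
-/

open MeasureTheory Filter Metric Set Topology
open scoped ENNReal NNReal

namespace Besicovitch

variable {α : Type*} [MetricSpace α] [SecondCountableTopology α] [HasBesicovitchCovering α]
  [MeasurableSpace α] [BorelSpace α]

theorem measure_le_of_frequently_closedBall_le {ρ : Measure α} [SFinite ρ] (ν : Measure α)
    [IsLocallyFiniteMeasure ν] {s : Set α}
    (hs : ∀ x ∈ s, ∃ᶠ r in 𝓝[>] 0, ρ (closedBall x r) ≤ ν (closedBall x r)) : ρ s ≤ ν s := by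
  refine (Besicovitch.vitaliFamily ρ).measure_le_of_frequently_le ν .rfl s fun x hx => ?_
  refine (Besicovitch.vitaliFamily ρ).frequently_filterAt_iff.2 fun δ hδ => ?_
  obtain ⟨r, ⟨hr0, hrδ⟩, hr⟩ := frequently_iff.1 (hs x hx) (Ioc_mem_nhdsGT hδ)
  exact ⟨closedBall x r, mem_image_of_mem _ hr0, closedBall_subset_closedBall hrδ, hr⟩

end Besicovitch

section FiniteDimensional

variable {E : Type*} [NormedAddCommGroup E] [NormedSpace ℝ E] [FiniteDimensional ℝ E]
  [MeasurableSpace E] [BorelSpace E]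

theorem frequently_measure_closedBall_le_smul_addHaar (μ : Measure E) [μ.IsAddHaarMeasure]
    (ρ : Measure E) {z : E}
    (hz : liminf (fun ε : ℝ => ρ (ball z ε) / ENNReal.ofReal (ε ^ Module.finrank ℝ E)) (𝓝[>] 0)
      = 0) {c : ℝ≥0} (hc : 0 < c) :
    ∃ᶠ r in 𝓝[>] 0, ρ (closedBall z r) ≤ (c • μ) (closedBall z r) := by
  set d := Module.finrank ℝ E
  have h2d : (2 : ℝ≥0∞) ^ d ≠ 0 := pow_ne_zero _ two_ne_zero
  have h2d' : (2 : ℝ≥0∞) ^ d ≠ ∞ := ENNReal.pow_ne_top ENNReal.ofNat_ne_top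
  have hc' : 0 < c * μ (ball 0 1) / 2 ^ d :=
    ENNReal.div_pos (mul_ne_zero (by exact_mod_cast hc.ne') (measure_ball_pos μ _ one_pos).ne') h2d'
  have hsmall := frequently_lt_of_liminf_lt (by isBoundedDefault) (hz.trans_lt hc')
  have hhalf : Tendsto (fun ε : ℝ => ε / 2) (𝓝[>] 0) (𝓝[>] 0) :=
    tendsto_nhdsWithin_iff.2
      ⟨by simpa using (tendsto_nhdsWithin_of_tendsto_nhds (a := (0 : ℝ)) (s := Ioi 0)
          tendsto_id).div_const (2 : ℝ),
        eventually_nhdsWithin_of_forall fun _ hε => mem_Ioi.2 (half_pos hε)⟩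
  -- Halving the radius divides the Haar measure of the ball by `2 ^ d`, which `hc'` absorbs.
  refine hhalf.frequently_map _ (fun ε ⟨hε, hε0⟩ => ?_)
    (hsmall.and_eventually self_mem_nhdsWithin)
  rw [ENNReal.div_lt_iff (Or.inl (ENNReal.ofReal_pos.2 (pow_pos hε0 d)).ne')
    (Or.inl ENNReal.ofReal_ne_top)] at hε
  have hpow : ENNReal.ofReal (ε ^ d) = 2 ^ d * ENNReal.ofReal ((ε / 2) ^ d) := by
    rw [ENNReal.ofReal_pow hε0.le, ENNReal.ofReal_pow (half_pos hε0).le, ← mul_pow,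
      ← ENNReal.ofReal_ofNat 2, ← ENNReal.ofReal_mul zero_le_two, mul_div_cancel₀ _ two_ne_zero]
  calc ρ (closedBall z (ε / 2)) ≤ ρ (ball z ε) :=
        measure_mono (closedBall_subset_ball (half_lt_self hε0))
    _ ≤ c * μ (ball 0 1) / 2 ^ d * ENNReal.ofReal (ε ^ d) := hε.le
    _ = (c • μ) (closedBall z (ε / 2)) := by
        rw [hpow, Measure.smul_apply, μ.addHaar_closedBall _ (half_pos hε0).le, ENNReal.smul_def,
          smul_eq_mul, ← mul_assoc, ENNReal.div_mul_cancel h2d h2d']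
        ring

theorem ae_pos_liminf_measure_ball_div (ρ : Measure E) [SFinite ρ] :
    ∀ᵐ z ∂ρ, 0 < liminf (fun ε : ℝ => ρ (ball z ε) / ENNReal.ofReal (ε ^ Module.finrank ℝ E))
      (𝓝[>] 0) := by
  set S := {z | liminf (fun ε : ℝ => ρ (ball z ε) / ENNReal.ofReal (ε ^ Module.finrank ℝ E))
      (𝓝[>] 0) = 0}
  simp_rw [ae_iff, not_lt, nonpos_iff_eq_zero]
  refine measure_null_of_locally_null S fun x _ => ⟨S ∩ ball x 1,
    inter_mem_nhdsWithin _ (ball_mem_nhds x one_pos), ?_⟩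
  have hle : ∀ c : ℝ≥0, 0 < c → ρ (S ∩ ball x 1) ≤ c * Measure.addHaar (S ∩ ball x 1) :=
    fun c hc => Besicovitch.measure_le_of_frequently_closedBall_le _ fun z hz =>
      frequently_measure_closedBall_le_smul_addHaar _ ρ hz.1 hc
  have hfin : Measure.addHaar (S ∩ ball x 1) ≠ ∞ :=
    ne_top_of_le_ne_top measure_ball_lt_top.ne (measure_mono inter_subset_right)
  have hlim : Tendsto (fun c : ℝ≥0 => (c : ℝ≥0∞) * Measure.addHaar (S ∩ ball x 1)) (𝓝[>] 0)
      (𝓝 0) := by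
    simpa using ENNReal.Tendsto.mul_const
      (ENNReal.tendsto_coe.2
        (tendsto_nhdsWithin_of_tendsto_nhds (a := (0 : ℝ≥0)) (s := Ioi 0) tendsto_id)) (Or.inr hfin)
  exact nonpos_iff_eq_zero.1 (ge_of_tendsto hlim (eventually_nhdsWithin_of_forall hle))

end FiniteDimensional

theorem measure_preimage_ball_eq_map_apply {Ω E F : Type*} [MeasurableSpace Ω]
    [PseudoMetricSpace E] [PseudoMetricSpace F] [MeasurableSpace F] [OpensMeasurableSpace F]
    {μ : Measure Ω} {X : Ω → E} {Y : Ω → F} {f : F → E} (hf : Isometry f) (hY : Measurable Y)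
    (hXY : X =ᵐ[μ] f ∘ Y) (y : F) (ε : ℝ) :
    μ (X ⁻¹' ball (f y) ε) = μ.map Y (ball y ε) := by
  rw [Measure.map_apply hY measurableSet_ball, ← hf.preimage_ball y ε]
  exact measure_congr (hXY.fun_comp (· ∈ ball (f y) ε))

/-- If a random vector `X` in `ℝⁿ` takes values almost surely in an
`m`-dimensional linear subspace `V` of `ℝⁿ`, then `P(X ∈ C_m(X)) = 1`. -/
theorem ae_mem_mould_of_subspace {Ω : Type*} [MeasurableSpace Ω]
    (μ : Measure Ω) [IsProbabilityMeasure μ] {n m : ℕ}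
    (X : Ω → EuclideanSpace ℝ (Fin n)) (hX : Measurable X)
    (V : Submodule ℝ (EuclideanSpace ℝ (Fin n))) (hV : Module.finrank ℝ V = m)
    (hXV : ∀ᵐ ω ∂μ, X ω ∈ V) :
    μ {ω | 0 < Filter.liminf
        (fun ε : ℝ => μ {ω' | ‖X ω' - X ω‖ < ε} / ENNReal.ofReal (ε ^ m))
        (nhdsWithin 0 (Set.Ioi 0))} = 1 := by
  subst hV
  set Y : Ω → V := fun ω => V.orthogonalProjectionOnto (X ω)
  have hY : Measurable Y := V.orthogonalProjectionOnto.continuous.measurable.comp hX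
  have hXY : X =ᵐ[μ] Subtype.val ∘ Y := hXV.mono fun ω hω =>
    congrArg Subtype.val (V.orthogonalProjectionOnto_mem_subspace_eq_self ⟨X ω, hω⟩).symm
  have hpos := ae_of_ae_map hY.aemeasurable (ae_pos_liminf_measure_ball_div (μ.map Y))
  refine (measure_congr (ae_eq_univ.2 (ae_iff.1 ?_))).trans measure_univ
  filter_upwards [hXY, hpos] with ω (hω : X ω = Y ω) hω_pos
  convert hω_pos using 5 with ε
  rw [← measure_preimage_ball_eq_map_apply isometry_subtype_coe hY hXY, ← hω]
  simp only [preimage, mem_ball, dist_eq_norm]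
end

section
/- Let X₁,…,X_n (n ≥ 2) be i.i.d. random vectors in ℝⁿ such that X₁,…,X_{n−1} are linearly independent almost surely, and set Y = ∧(X₁,…,X_{n−1}) / ‖∧(X₁,…,X_{n−1})‖_∞. Then Y ∈ C_{n−1}(Y) almost surely. -/
/-!
Since `X₁, …, X_{n-1}` are almost surely linearly independent, `Y` almost surely lies on the
unit sphere of the sup norm, which is covered by the `2n` hyperplanes `{z | z i = ±1}`. Deleting
the `i`-th coordinate maps `{z | z i = c}` isometrically onto `ℝ^(n-1)`, so it suffices that a
finite measure `ρ` on `ℝ^(n-1)` gives `ρ`-almost every ball `B(x, r)` mass at least `c · r^(n-1)`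
for small `r`. This follows from Besicovitch differentiation: `vol(B(x, r)) / ρ(B(x, r))` tends
to the Radon–Nikodym derivative of Lebesgue measure with respect to `ρ`, which is finite `ρ`-a.e.
-/

open MeasureTheory Filter Matrix

/-- The generalized cross product of `m` vectors in `ℝ^(m+1)`: its `i`-th component is
the determinant of the matrix whose first row is the `i`-th standard basis vector and
whose remaining rows are `x 0, …, x (m-1)`. -/
noncomputable def gcross {m : ℕ} (x : Fin m → (Fin (m + 1) → ℝ)) : Fin (m + 1) → ℝ :=
  fun i => (Matrix.of (Fin.cons (Pi.single i 1) x)).det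

/-- `Y = ∧(X₁,…,X_{n-1}) / ‖∧(X₁,…,X_{n-1})‖_∞`; here `ℝⁿ = Fin (m+1) → ℝ` carries
the sup norm as its norm. -/
noncomputable def Yvec {Ω : Type*} {m : ℕ} (X : Fin (m + 1) → Ω → (Fin (m + 1) → ℝ))
    (ω : Ω) : Fin (m + 1) → ℝ :=
  (‖gcross fun j => X (Fin.castSucc j) ω‖)⁻¹ • gcross fun j => X (Fin.castSucc j) ω

open Metric Set Topology
open scoped ENNReal

theorem det_of_cons_eq_dotProduct_gcross {m : ℕ} (v : Fin (m + 1) → ℝ)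
    (x : Fin m → Fin (m + 1) → ℝ) : (Matrix.of (Fin.cons v x)).det = v ⬝ᵥ gcross x := by
  have minor (w : Fin (m + 1) → ℝ) (j : Fin (m + 1)) :
      (of (Fin.cons w x)).submatrix Fin.succ j.succAbove = (of x).submatrix id j.succAbove := rfl
  simp only [gcross, det_succ_row_zero, minor, dotProduct, Finset.mul_sum]
  refine Finset.sum_congr rfl fun j _ => ?_
  rw [Finset.sum_eq_single_of_mem j (Finset.mem_univ j) fun k _ hk => by simp [hk]]
  simp only [of_apply, Fin.cons_zero, Pi.single_eq_same]
  ring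

theorem gcross_ne_zero {m : ℕ} {x : Fin m → Fin (m + 1) → ℝ} (hx : LinearIndependent ℝ x) :
    gcross x ≠ 0 := by
  have hspan : Submodule.span ℝ (range x) ≠ ⊤ := fun h => by
    have := finrank_range_le_card (R := ℝ) x
    rw [Set.finrank, h, finrank_top, Module.finrank_fin_fun, Fintype.card_fin] at this
    omega
  obtain ⟨v, -, hv⟩ := SetLike.exists_of_lt hspan.lt_top
  have hdet : (Matrix.of (Fin.cons v x)).det ≠ 0 := by
    rw [← isUnit_iff_ne_zero, ← Matrix.isUnit_iff_isUnit_det]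
    exact Matrix.linearIndependent_rows_iff_isUnit.1 (linearIndependent_finCons.2 ⟨hx, hv⟩)
  intro h
  simp [det_of_cons_eq_dotProduct_gcross, h] at hdet

theorem continuous_gcross {m : ℕ} : Continuous (gcross (m := m)) := by
  unfold gcross
  fun_prop

theorem measurable_Yvec {Ω : Type*} [MeasurableSpace Ω] {m : ℕ}
    {X : Fin (m + 1) → Ω → (Fin (m + 1) → ℝ)} (hX : ∀ i, Measurable (X i)) :
    Measurable (Yvec X) := by
  have hg : Measurable fun ω => gcross fun j => X (Fin.castSucc j) ω :=
    continuous_gcross.measurable.comp (measurable_pi_lambda _ fun j => hX _)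
  exact hg.norm.inv.smul hg

theorem norm_Yvec {Ω : Type*} {m : ℕ} {X : Fin (m + 1) → Ω → (Fin (m + 1) → ℝ)} {ω : Ω}
    (h : LinearIndependent ℝ fun j : Fin m => X (Fin.castSucc j) ω) : ‖Yvec X ω‖ = 1 :=
  norm_smul_inv_norm (gcross_ne_zero h)

theorem Pi.exists_norm_apply_eq_norm {ι : Type*} [Fintype ι] [Nonempty ι] {E : ι → Type*}
    [∀ i, SeminormedAddCommGroup (E i)] (f : ∀ i, E i) : ∃ i, ‖f i‖ = ‖f‖ := by
  obtain ⟨i, -, hi⟩ := Finset.exists_mem_eq_sup Finset.univ Finset.univ_nonempty (‖f ·‖₊)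
  exact ⟨i, by rw [Pi.norm_def, hi, coe_nnnorm]⟩

theorem Fin.dist_le_dist_removeNth {n : ℕ} {E : Type*} [PseudoMetricSpace E] {i : Fin (n + 1)}
    {z w : Fin (n + 1) → E} (h : z i = w i) :
    dist z w ≤ dist (Fin.removeNth i z) (Fin.removeNth i w) := by
  refine (dist_pi_le_iff dist_nonneg).2 fun b => ?_
  rcases Fin.eq_self_or_eq_succAbove i b with rfl | ⟨j, rfl⟩
  · simp [h]
  · exact dist_le_pi_dist (Fin.removeNth i z) (Fin.removeNth i w) j

theorem Besicovitch.ae_eventually_mul_measure_closedBall_le {β : Type*} [MetricSpace β]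
    [MeasurableSpace β] [BorelSpace β] [SecondCountableTopology β] [HasBesicovitchCovering β]
    (μ ρ : Measure β) [IsLocallyFiniteMeasure μ] [IsLocallyFiniteMeasure ρ] :
    ∀ᵐ x ∂ρ, ∃ c : ℝ≥0∞, 0 < c ∧
      ∀ᶠ r in 𝓝[>] 0, c * μ (closedBall x r) ≤ ρ (closedBall x r) := by
  filter_upwards [Besicovitch.ae_tendsto_rnDeriv μ ρ, Measure.rnDeriv_lt_top μ ρ] with x hlim hfin
  set D := μ.rnDeriv ρ x + 1
  have hD0 : D ≠ 0 := by positivity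
  have hDtop : D ≠ ∞ := ENNReal.add_ne_top.2 ⟨hfin.ne, ENNReal.one_ne_top⟩
  refine ⟨D⁻¹, ENNReal.inv_pos.2 hDtop, ?_⟩
  filter_upwards [hlim.eventually (gt_mem_nhds (ENNReal.lt_add_right hfin.ne one_ne_zero))]
    with r hr
  rw [ENNReal.inv_mul_le_iff hD0 hDtop, ← ENNReal.div_le_iff_le_mul (.inr hDtop) (.inr hD0)]
  exact hr.le

theorem map_restrict_closedBall_le {E F : Type*} [PseudoMetricSpace E] [PseudoMetricSpace F]
    [MeasurableSpace E] [MeasurableSpace F] [OpensMeasurableSpace F] (ν : Measure E)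
    {S : Set E} (hS : MeasurableSet S) {π : E → F} (hπ : Measurable π)
    (hdist : ∀ z ∈ S, ∀ w ∈ S, dist z w ≤ dist (π z) (π w)) {z : E} (hz : z ∈ S) (r : ℝ) :
    (ν.restrict S).map π (closedBall (π z) r) ≤ ν (closedBall z r) := by
  rw [Measure.map_apply hπ measurableSet_closedBall, Measure.restrict_apply' hS]
  exact measure_mono fun w ⟨hw, hwS⟩ => (hdist w hwS z hz).trans hw

/-- `mould ν m` is the `m`-dimensional mould `C_m(Z)` of a random vector `Z` with law `ν`. -/
def mould {E : Type*} [PseudoMetricSpace E] [MeasurableSpace E] (ν : Measure E) (m : ℕ) :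
    Set E :=
  {z | 0 < liminf (fun ε : ℝ => ν (ball z ε) / ENNReal.ofReal (ε ^ m)) (𝓝[>] 0)}

theorem ae_mem_mould_of_apply_eq {m : ℕ} (ν : Measure (Fin (m + 1) → ℝ)) [IsFiniteMeasure ν]
    (i : Fin (m + 1)) (c : ℝ) : ∀ᵐ z ∂ν, z i = c → z ∈ mould ν m := by
  have hH : MeasurableSet {z : Fin (m + 1) → ℝ | z i = c} :=
    measurableSet_eq_fun (measurable_pi_apply i) measurable_const
  have hπ : Measurable (Fin.removeNth (α := fun _ => ℝ) i) :=
    measurable_pi_lambda _ fun _ => measurable_pi_apply _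
  set ρ := (ν.restrict {z | z i = c}).map (Fin.removeNth i)
  have hρ := ae_of_ae_map hπ.aemeasurable
    (Besicovitch.ae_eventually_mul_measure_closedBall_le volume ρ)
  filter_upwards [(ae_restrict_iff' hH).1 hρ] with z hz hzc
  obtain ⟨a, ha, hev⟩ := hz hzc
  refine ha.trans_le (le_liminf_of_le (by isBoundedDefault) ?_)
  filter_upwards [eventually_nhdsGT_zero_mul_left (inv_pos.2 two_pos) hev, self_mem_nhdsWithin]
    with ε hε (hε0 : 0 < ε)
  rw [ENNReal.le_div_iff_mul_le (.inl (by simpa using pow_pos hε0 m)) (.inl ENNReal.ofReal_ne_top)]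
  calc a * ENNReal.ofReal (ε ^ m) = a * volume (closedBall (Fin.removeNth i z) (2⁻¹ * ε)) := by
        rw [Real.volume_pi_closedBall _ (by positivity), Fintype.card_fin,
          mul_inv_cancel_left₀ two_ne_zero]
    _ ≤ ρ (closedBall (Fin.removeNth i z) (2⁻¹ * ε)) := hε
    _ ≤ ν (closedBall z (2⁻¹ * ε)) :=
        map_restrict_closedBall_le ν hH hπ
          (fun _ hu _ hv => Fin.dist_le_dist_removeNth (hu.trans hv.symm)) hzc _
    _ ≤ ν (ball z ε) := measure_mono (closedBall_subset_ball (by linarith))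

theorem MeasureTheory.Measure.map_apply_ball {Ω E : Type*} [MeasurableSpace Ω]
    [SeminormedAddCommGroup E] [MeasurableSpace E] [OpensMeasurableSpace E] (μ : Measure Ω)
    {Y : Ω → E} (hY : Measurable Y) (z : E) (ε : ℝ) : μ.map Y (ball z ε) = μ {ω | ‖Y ω - z‖ < ε} := by
  rw [Measure.map_apply hY measurableSet_ball]
  simp only [preimage, mem_ball, dist_eq_norm]

theorem Yvec_ae_mem_mould_general {Ω : Type*} [MeasurableSpace Ω]
    (μ : Measure Ω) [IsProbabilityMeasure μ] {m : ℕ}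
    (X : Fin (m + 1) → Ω → (Fin (m + 1) → ℝ))
    (hmeas : ∀ i, Measurable (X i))
    (hli : ∀ᵐ ω ∂μ, LinearIndependent ℝ (fun j : Fin m => X (Fin.castSucc j) ω)) :
    μ {ω | 0 < Filter.liminf
        (fun ε : ℝ => μ {ω' | ‖Yvec X ω' - Yvec X ω‖ < ε} / ENNReal.ofReal (ε ^ m))
        (nhdsWithin 0 (Set.Ioi 0))} = 1 := by
  have hY : Measurable (Yvec X) := measurable_Yvec hmeas
  set ν := μ.map (Yvec X)
  have hsphere : ∀ᵐ z ∂ν, ‖z‖ = 1 :=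
    (ae_map_iff hY.aemeasurable (measurableSet_eq_fun measurable_norm measurable_const)).2
      (hli.mono fun _ => norm_Yvec)
  have hmould : ∀ᵐ z ∂ν, z ∈ mould ν m := by
    filter_upwards [hsphere, ae_all_iff.2 fun i => ae_mem_mould_of_apply_eq ν i 1,
      ae_all_iff.2 fun i => ae_mem_mould_of_apply_eq ν i (-1)] with z hz hpos hneg
    obtain ⟨i, hi⟩ := Pi.exists_norm_apply_eq_norm z
    rw [hz, Real.norm_eq_abs, abs_eq zero_le_one] at hi
    exact hi.elim (hpos i) (hneg i)
  have hpre : ∀ᵐ ω ∂μ, Yvec X ω ∈ mould ν m := ae_of_ae_map hY.aemeasurable hmould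
  simp only [mould, ν, Measure.map_apply_ball μ hY] at hpre
  exact (measure_congr (ae_eq_univ.2 hpre)).trans measure_univ

/-- If `X₁, …, X_n` (`n = m+1 ≥ 2`) are i.i.d. random vectors in `ℝⁿ`
with `X₁, …, X_{n-1}` a.s. linearly independent, and
`Y = ∧(X₁,…,X_{n-1})/‖∧(X₁,…,X_{n-1})‖_∞`, then `Y ∈ C_{n-1}(Y)` almost surely. -/
theorem Yvec_ae_mem_mould {Ω : Type*} [MeasurableSpace Ω]
    (μ : Measure Ω) [IsProbabilityMeasure μ] {m : ℕ} (hm : 1 ≤ m)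
    (X : Fin (m + 1) → Ω → (Fin (m + 1) → ℝ))
    (hmeas : ∀ i, Measurable (X i))
    (hindep : ProbabilityTheory.iIndepFun X μ)
    (hident : ∀ i, μ.map (X i) = μ.map (X 0))
    (hli : ∀ᵐ ω ∂μ, LinearIndependent ℝ (fun j : Fin m => X (Fin.castSucc j) ω)) :
    μ {ω | 0 < Filter.liminf
        (fun ε : ℝ => μ {ω' | ‖Yvec X ω' - Yvec X ω‖ < ε} / ENNReal.ofReal (ε ^ m))
        (nhdsWithin 0 (Set.Ioi 0))} = 1 :=
  Yvec_ae_mem_mould_general μ X hmeas hli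
end

section
/- Let X₁,…,X_n (n ≥ 2) be i.i.d. random vectors in ℝⁿ such that X₁,…,X_{n−1} are linearly independent almost surely and such that the X_i are bounded (there is r > 0 with ‖X_i‖₁ < r almost surely). Set Y = ∧(X₁,…,X_{n−1}) / ‖∧(X₁,…,X_{n−1})‖_∞. Then for every y ∈ C_{n−1}(Y) one has 0 ∈ C₁(X_n·y), i.e. liminf_{ε→0⁺} P(|X_n·y| < ε)/ε > 0. -/
open MeasureTheory Filter Matrix

/-!
`Y` is orthogonal to `X₁, …, X_{n-1}`, so `‖Y - y‖_∞ < ε` forces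
`|X_j · y| = |X_j · (y - Y)| ≤ ‖X_j‖₁ ε < r ε` for every `j < n`. Independence and identical
distribution then give `P(‖Y - y‖_∞ < ε) ≤ P(|X_n · y| < r ε) ^ (n-1)`, so a lower bound
`c ε ^ (n-1)` on the left yields `P(|X_n · y| < t) ≥ c ^ (1/(n-1)) t / r` for small `t > 0`.
-/

open scoped ENNReal Topology

theorem dotProduct_gcross {m : ℕ} (x : Fin m → Fin (m + 1) → ℝ) (v : Fin (m + 1) → ℝ) :
    v ⬝ᵥ gcross x = (Matrix.of (Fin.cons v x)).det := by
  simp only [gcross, dotProduct, Matrix.det_succ_row_zero, of_apply, Fin.cons_zero,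
    Pi.single_apply, mul_ite, mul_one, mul_zero, ite_mul, zero_mul, Finset.sum_ite_eq',
    Finset.mem_univ, if_true]
  refine Finset.sum_congr rfl fun i _ => ?_
  have minor_eq : (of (Fin.cons (Pi.single i 1) x)).submatrix Fin.succ i.succAbove =
      (of (Fin.cons v x)).submatrix Fin.succ i.succAbove := rfl
  rw [minor_eq]
  ring

theorem dotProduct_gcross_eq_zero {m : ℕ} (x : Fin m → Fin (m + 1) → ℝ) (j : Fin m) :
    x j ⬝ᵥ gcross x = 0 := by
  rw [dotProduct_gcross]
  exact Matrix.det_zero_of_row_eq (Fin.succ_ne_zero j).symm rfl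

theorem abs_dotProduct_le_sum_abs_mul_norm {ι : Type*} [Fintype ι] (v w : ι → ℝ) :
    |v ⬝ᵥ w| ≤ (∑ k, |v k|) * ‖w‖ :=
  calc |v ⬝ᵥ w| ≤ ∑ k, |v k * w k| := Finset.abs_sum_le_sum_abs _ _
    _ ≤ ∑ k, |v k| * ‖w‖ := by
        gcongr with k
        rw [abs_mul]
        gcongr
        exact norm_le_pi_norm w k
    _ = (∑ k, |v k|) * ‖w‖ := (Finset.sum_mul ..).symm

theorem abs_dotProduct_lt_of_dotProduct_eq_zero {ι : Type*} [Fintype ι] {v w y : ι → ℝ}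
    {r ε : ℝ} (hvw : v ⬝ᵥ w = 0) (hv : ∑ k, |v k| < r) (hwy : ‖w - y‖ < ε) :
    |v ⬝ᵥ y| < r * ε :=
  calc |v ⬝ᵥ y| = |v ⬝ᵥ (w - y)| := by rw [dotProduct_sub, hvw, zero_sub, abs_neg]
    _ ≤ (∑ k, |v k|) * ‖w - y‖ := abs_dotProduct_le_sum_abs_mul_norm v (w - y)
    _ < r * ε := mul_lt_mul'' hv hwy (Finset.sum_nonneg fun k _ => abs_nonneg _) (norm_nonneg _)

theorem dotProduct_Yvec_eq_zero {Ω : Type*} {m : ℕ} (X : Fin (m + 1) → Ω → Fin (m + 1) → ℝ)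
    (ω : Ω) (j : Fin m) : X j.castSucc ω ⬝ᵥ Yvec X ω = 0 := by
  rw [Yvec, dotProduct_smul, dotProduct_gcross_eq_zero (fun j => X j.castSucc ω) j, smul_zero]

theorem ProbabilityTheory.iIndepFun.measure_iInter_preimage_eq_pow {Ω ι β : Type*}
    [MeasurableSpace Ω] [MeasurableSpace β] [Fintype ι] {μ : Measure Ω} {X : ι → Ω → β}
    {ν : Measure β} (hX : ∀ i, Measurable (X i)) (hindep : iIndepFun X μ)
    (hident : ∀ i, μ.map (X i) = ν) {S : Set β} (hS : MeasurableSet S) :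
    μ (⋂ i, X i ⁻¹' S) = ν S ^ Fintype.card ι := by
  rw [hindep.meas_iInter fun i => ⟨S, hS, rfl⟩, ← Finset.card_univ, ← Finset.prod_const]
  refine Finset.prod_congr rfl fun i _ => ?_
  rw [← hident i, Measure.map_apply (hX i) hS]

theorem ENNReal.rpow_inv_natCast_mul_le_of_mul_pow_le {a b c : ℝ≥0∞} {m : ℕ} (hm : m ≠ 0)
    (h : c * a ^ m ≤ b ^ m) : c ^ (m⁻¹ : ℝ) * a ≤ b := by
  rwa [← ENNReal.pow_le_pow_left_iff hm, mul_pow, ENNReal.rpow_inv_natCast_pow hm]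

section LowerDensity

variable {f g : ℝ → ℝ≥0∞} {m : ℕ}

theorem exists_eventually_mul_pow_le_of_liminf_pos
    (hf : 0 < liminf (fun ε => f ε / ENNReal.ofReal (ε ^ m)) (𝓝[>] 0)) :
    ∃ c, 0 < c ∧ c ≠ ∞ ∧ ∀ᶠ ε in 𝓝[>] 0, c * ENNReal.ofReal ε ^ m ≤ f ε := by
  obtain ⟨c, hc0, hc⟩ := exists_between (lt_min hf zero_lt_one)
  refine ⟨c, hc0, ne_top_of_lt (hc.trans_le (min_le_right _ _)), ?_⟩
  filter_upwards [eventually_lt_of_lt_liminf (hc.trans_le (min_le_left _ _)),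
    self_mem_nhdsWithin] with ε hε (hε0 : 0 < ε)
  rw [← ENNReal.ofReal_pow hε0.le]
  exact (ENNReal.lt_div_iff_mul_lt (.inl (by positivity)) (.inl ENNReal.ofReal_ne_top)).1 hε |>.le

theorem liminf_pos_of_eventually_mul_le {c : ℝ≥0∞} (hc : 0 < c)
    (h : ∀ᶠ t in 𝓝[>] 0, c * ENNReal.ofReal t ≤ g t) :
    0 < liminf (fun t => g t / ENNReal.ofReal t) (𝓝[>] 0) := by
  refine hc.trans_le (le_liminf_of_le (by isBoundedDefault) ?_)
  filter_upwards [h, self_mem_nhdsWithin] with t ht (ht0 : 0 < t)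
  exact (ENNReal.le_div_iff_mul_le (.inl (by positivity)) (.inl ENNReal.ofReal_ne_top)).2 ht

theorem liminf_div_pos_of_le_pow_comp_mul {r : ℝ} (hm : m ≠ 0) (hr : 0 < r)
    (hfg : ∀ ε > 0, f ε ≤ g (r * ε) ^ m)
    (hf : 0 < liminf (fun ε => f ε / ENNReal.ofReal (ε ^ m)) (𝓝[>] 0)) :
    0 < liminf (fun t => g t / ENNReal.ofReal t) (𝓝[>] 0) := by
  obtain ⟨c, hc0, hctop, hc⟩ := exists_eventually_mul_pow_le_of_liminf_pos hf
  refine liminf_pos_of_eventually_mul_le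
    (c := c ^ (m⁻¹ : ℝ) * ENNReal.ofReal r⁻¹) (ENNReal.mul_pos
      (ENNReal.rpow_pos hc0 hctop).ne' (ENNReal.ofReal_pos.2 (inv_pos.2 hr)).ne') ?_
  filter_upwards [eventually_nhdsGT_zero_mul_left (inv_pos.2 hr) (hc.and self_mem_nhdsWithin)]
    with t ⟨ht, (ht0 : 0 < r⁻¹ * t)⟩
  have hroot := ENNReal.rpow_inv_natCast_mul_le_of_mul_pow_le hm (ht.trans (hfg _ ht0))
  rwa [mul_inv_cancel_left₀ hr.ne', ENNReal.ofReal_mul (inv_nonneg.2 hr.le), ← mul_assoc] at hroot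

end LowerDensity

theorem mould_zero_of_mem_mould_Yvec_general {Ω : Type*} [MeasurableSpace Ω]
    (μ : Measure Ω) [IsProbabilityMeasure μ] {m : ℕ} (hm : 1 ≤ m)
    (X : Fin (m + 1) → Ω → (Fin (m + 1) → ℝ))
    (hmeas : ∀ i, Measurable (X i))
    (hindep : ProbabilityTheory.iIndepFun X μ)
    (hident : ∀ i, μ.map (X i) = μ.map (X 0))
    (r : ℝ) (hr : ∀ i, ∀ᵐ ω ∂μ, ∑ k, |X i ω k| < r)
    (y : Fin (m + 1) → ℝ)
    (hy : 0 < Filter.liminf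
        (fun ε : ℝ => μ {ω | ‖Yvec X ω - y‖ < ε} / ENNReal.ofReal (ε ^ m))
        (nhdsWithin 0 (Set.Ioi 0))) :
    0 < Filter.liminf
        (fun ε : ℝ => μ {ω | |X (Fin.last m) ω ⬝ᵥ y| < ε} / ENNReal.ofReal ε)
        (nhdsWithin 0 (Set.Ioi 0)) := by
  have hr0 : 0 < r := by
    obtain ⟨ω, hω⟩ := (hr 0).exists
    exact (Finset.sum_nonneg fun k _ => abs_nonneg _).trans_lt hω
  set slab : ℝ → Set (Fin (m + 1) → ℝ) := fun t => {x | |x ⬝ᵥ y| < t}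
  have hslab (t : ℝ) : MeasurableSet (slab t) :=
    measurableSet_lt ((continuous_id.dotProduct continuous_const).abs.measurable) measurable_const
  refine liminf_div_pos_of_le_pow_comp_mul (by omega) hr0 (fun ε _ => ?_) hy
  calc μ {ω | ‖Yvec X ω - y‖ < ε}
      ≤ μ (⋂ j : Fin m, X j.castSucc ⁻¹' slab (r * ε)) := by
        refine measure_mono_ae ?_
        filter_upwards [ae_all_iff.2 fun j : Fin m => hr j.castSucc] with ω hω hY
        exact Set.mem_iInter.2 fun j =>
          abs_dotProduct_lt_of_dotProduct_eq_zero (dotProduct_Yvec_eq_zero X ω j) (hω j) hY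
    _ = μ.map (X (Fin.last m)) (slab (r * ε)) ^ m := by
        rw [(hindep.precomp (Fin.castSucc_injective m)).measure_iInter_preimage_eq_pow
          (fun _ => hmeas _) (fun _ => (hident _).trans (hident _).symm) (hslab _),
          Fintype.card_fin]
    _ = μ {ω | |X (Fin.last m) ω ⬝ᵥ y| < r * ε} ^ m := by
        rw [Measure.map_apply (hmeas _) (hslab _)]
        rfl

/-- If `X₁, …, X_n` (`n = m+1 ≥ 2`) are i.i.d. bounded random vectors
in `ℝⁿ` (with `‖X_i‖₁ < r` a.s.) whose first `n-1` coordinates are a.s. linearly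
independent, and `Y = ∧(X₁,…,X_{n-1})/‖∧(X₁,…,X_{n-1})‖_∞`, then for every
`y ∈ C_{n-1}(Y)` one has `0 ∈ C₁(X_n · y)`. -/
theorem mould_zero_of_mem_mould_Yvec {Ω : Type*} [MeasurableSpace Ω]
    (μ : Measure Ω) [IsProbabilityMeasure μ] {m : ℕ} (hm : 1 ≤ m)
    (X : Fin (m + 1) → Ω → (Fin (m + 1) → ℝ))
    (hmeas : ∀ i, Measurable (X i))
    (hindep : ProbabilityTheory.iIndepFun X μ)
    (hident : ∀ i, μ.map (X i) = μ.map (X 0))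
    (hli : ∀ᵐ ω ∂μ, LinearIndependent ℝ (fun j : Fin m => X (Fin.castSucc j) ω))
    (r : ℝ) (hr : ∀ i, ∀ᵐ ω ∂μ, ∑ k, |X i ω k| < r)
    (y : Fin (m + 1) → ℝ)
    (hy : 0 < Filter.liminf
        (fun ε : ℝ => μ {ω | ‖Yvec X ω - y‖ < ε} / ENNReal.ofReal (ε ^ m))
        (nhdsWithin 0 (Set.Ioi 0))) :
    0 < Filter.liminf
        (fun ε : ℝ => μ {ω | |X (Fin.last m) ω ⬝ᵥ y| < ε} / ENNReal.ofReal ε)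
        (nhdsWithin 0 (Set.Ioi 0)) :=
  mould_zero_of_mem_mould_Yvec_general μ hm X hmeas hindep hident r hr y hy
end
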